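/- arXiv:2208.07821 — 2 statements merged into one kernel-verified Lean document; each statement's English description precedes it below -/
import Mathlib

section
/- For x, y ∈ ℝ with x - y ≠ 0, the matrices C¹ = [[x, 1],[((x-y)⁴+1)/(4(x-y)²) - x², -x]] and C² = [[y, 1],[((x-y)⁴+1)/(4(x-y)²) - y², -y]] satisfy C¹C² + C²C¹ = (1/2)(1/(x-y)² - (x-y)²)·I and det(C²C¹) = ((x-y)⁴+1)²/(16(x-y)⁴). In particular, when x - y = ±1 the matrices anticommute and C²C¹ is invertible. -/
/-!
Both matrices have the shape `[[t, 1], [k - t², -t]]` with the same `k = (c⁴ + 1) / (4c²)`,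
`c = x - y`. Such a matrix has determinant `-k`, and two of them anticommute up to the scalar
`2k - (s - t)²`, because the off-diagonal entries of the anticommutator cancel. Substituting `k`
gives both formulas; for `c = ±1` one gets `k = 1/2`, so the anticommutator vanishes and
`det (C²C¹) = 1/4`.
-/

open Matrix Complex

section CliffordMatrix

variable {R : Type*} [CommRing R]

def cliffordMatrix (k t : R) : Matrix (Fin 2) (Fin 2) R :=
  !![t, 1; k - t ^ 2, -t]

theorem cliffordMatrix_mul_add_mul_swap (k s t : R) :
    cliffordMatrix k s * cliffordMatrix k t + cliffordMatrix k t * cliffordMatrix k s =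
      (2 * k - (s - t) ^ 2) • (1 : Matrix (Fin 2) (Fin 2) R) := by
  rw [cliffordMatrix, cliffordMatrix, mul_fin_two, mul_fin_two, one_fin_two, smul_of]
  ext i j
  fin_cases i <;> fin_cases j <;> simp <;> ring

theorem det_cliffordMatrix (k t : R) : (cliffordMatrix k t).det = -k := by
  rw [cliffordMatrix, det_fin_two_of]
  ring

end CliffordMatrix

/-- At `c = 0` both sides vanish, by the convention `a / 0 = 0`. -/
theorem two_mul_div_sub_sq {K : Type*} [Field K] [NeZero (2 : K)] (c : K) :
    2 * ((c ^ 4 + 1) / (4 * c ^ 2)) - c ^ 2 = 1 / 2 * (1 / c ^ 2 - c ^ 2) := by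
  rcases eq_or_ne c 0 with rfl | hc
  · simp
  · rw [show (4 : K) = 2 * 2 by norm_num]
    field_simp
    ring

theorem stmt12_general (x y : ℝ) :
    let C1 : Matrix (Fin 2) (Fin 2) ℂ :=
      !![(x : ℂ), 1;
         (((x : ℂ) - y) ^ 4 + 1) / (4 * ((x : ℂ) - y) ^ 2) - (x : ℂ) ^ 2, -(x : ℂ)]
    let C2 : Matrix (Fin 2) (Fin 2) ℂ :=
      !![(y : ℂ), 1;
         (((x : ℂ) - y) ^ 4 + 1) / (4 * ((x : ℂ) - y) ^ 2) - (y : ℂ) ^ 2, -(y : ℂ)]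
    C1 * C2 + C2 * C1 =
        ((1 / 2 : ℂ) * (1 / ((x : ℂ) - y) ^ 2 - ((x : ℂ) - y) ^ 2)) •
          (1 : Matrix (Fin 2) (Fin 2) ℂ) ∧
      (C2 * C1).det = ((((x : ℂ) - y) ^ 4 + 1) ^ 2) / (16 * ((x : ℂ) - y) ^ 4) ∧
      ((x - y = 1 ∨ x - y = -1) → C1 * C2 + C2 * C1 = 0 ∧ IsUnit (C2 * C1)) := by
  intro C1 C2
  set c : ℂ := (x : ℂ) - y with hc
  set k : ℂ := (c ^ 4 + 1) / (4 * c ^ 2) with hk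
  have hanti : C1 * C2 + C2 * C1 = (2 * k - c ^ 2) • 1 :=
    cliffordMatrix_mul_add_mul_swap k (x : ℂ) y
  have hdet : (C2 * C1).det = k ^ 2 := by
    rw [det_mul, show C1 = cliffordMatrix k (x : ℂ) from rfl,
      show C2 = cliffordMatrix k (y : ℂ) from rfl, det_cliffordMatrix, det_cliffordMatrix]
    ring
  refine ⟨hanti.trans (by rw [two_mul_div_sub_sq]), hdet.trans (by rw [hk, div_pow]; ring),
    fun hc_unit => ?_⟩
  have hc_sq : c ^ 2 = 1 := by
    rcases hc_unit with h | h <;> simp [hc, ← ofReal_sub, h]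
  have hk_half : k = 1 / 2 := by
    rw [hk, show c ^ 4 = (c ^ 2) ^ 2 by ring, hc_sq]
    norm_num
  refine ⟨by rw [hanti, hc_sq, hk_half]; norm_num, ?_⟩
  rw [isUnit_iff_isUnit_det, hdet, hk_half]
  norm_num

/-- Example 4.5(a): for real `x ≠ y`, the type II Clifford matrices
satisfy the stated anticommutator and determinant formulae; in particular for
`x - y = ±1` they anticommute and `C²C¹` is invertible. -/
theorem stmt12 (x y : ℝ) (hxy : x - y ≠ 0) :
    let C1 : Matrix (Fin 2) (Fin 2) ℂ :=
      !![(x : ℂ), 1;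
         (((x : ℂ) - y) ^ 4 + 1) / (4 * ((x : ℂ) - y) ^ 2) - (x : ℂ) ^ 2, -(x : ℂ)]
    let C2 : Matrix (Fin 2) (Fin 2) ℂ :=
      !![(y : ℂ), 1;
         (((x : ℂ) - y) ^ 4 + 1) / (4 * ((x : ℂ) - y) ^ 2) - (y : ℂ) ^ 2, -(y : ℂ)]
    C1 * C2 + C2 * C1 =
        ((1 / 2 : ℂ) * (1 / ((x : ℂ) - y) ^ 2 - ((x : ℂ) - y) ^ 2)) •
          (1 : Matrix (Fin 2) (Fin 2) ℂ) ∧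
      (C2 * C1).det = ((((x : ℂ) - y) ^ 4 + 1) ^ 2) / (16 * ((x : ℂ) - y) ^ 4) ∧
      ((x - y = 1 ∨ x - y = -1) → C1 * C2 + C2 * C1 = 0 ∧ IsUnit (C2 * C1)) :=
  stmt12_general x y
end

section
/- For the Dirac operator on M₂(ℂ)⊗ℂ² given by (D̸ψ)_β = (i/(2√2))((σ¹ψ_α + ψ_α σ²)(σ¹)^α{}_β + ε'(ψ_α σ¹ + σ²ψ_α)(σ³)^α{}_β) with ε' = ±1, D̸ is antihermitian with respect to the inner product ⟨φ,ψ⟩ = Tr(φ_α† ψ_α): that is, ⟨D̸φ,ψ⟩ = -⟨φ,D̸ψ⟩ for all φ, ψ ∈ M₂(ℂ)². -/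
/-!
Write `D̸ = c • H` with `c = i/(2√2)`. The operator `H` is symmetric for the trace inner product:
it is built from left and right multiplication by the Hermitian matrices `σ¹, σ²` (symmetric by
cyclicity of the trace), followed by mixing the spinor index with the real symmetric `σ¹, σ³`,
which commutes with them, and `ε'` is real. Since `c` is purely imaginary, `D̸` is antihermitian.
-/

open Matrix Complex

noncomputable def pauli1 : Matrix (Fin 2) (Fin 2) ℂ := !![0, 1; 1, 0]
noncomputable def pauli2 : Matrix (Fin 2) (Fin 2) ℂ := !![0, -Complex.I; Complex.I, 0]
noncomputable def pauli3 : Matrix (Fin 2) (Fin 2) ℂ := !![1, 0; 0, -1]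

/-- The geometric Dirac operator on `M₂(ℂ) ⊗ ℂ²`:
`(D̸ψ)_β = (i/(2√2))((σ¹ψ_α + ψ_ασ²)(σ¹)^α_β + ε'(ψ_ασ¹ + σ²ψ_α)(σ³)^α_β)`. -/
noncomputable def Dirac (ε' : ℂ) (ψ : Fin 2 → Matrix (Fin 2) (Fin 2) ℂ) :
    Fin 2 → Matrix (Fin 2) (Fin 2) ℂ :=
  fun β => (Complex.I / (2 * (Real.sqrt 2 : ℂ))) •
    ∑ α : Fin 2,
      ((pauli1 α β) • (pauli1 * ψ α + ψ α * pauli2) +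
        (ε' * pauli3 α β) • (ψ α * pauli1 + pauli2 * ψ α))

/-- The spinor inner product `⟨φ,ψ⟩ = Tr(φ_α† ψ_α)` (sum over `α`). -/
noncomputable def spinInner (φ ψ : Fin 2 → Matrix (Fin 2) (Fin 2) ℂ) : ℂ :=
  ∑ α : Fin 2, ((φ α)ᴴ * ψ α).trace

section Trace

variable {n R : Type*} [Fintype n] [CommRing R] [StarRing R]

lemma Matrix.IsHermitian.trace_conjTranspose_mul_left {A : Matrix n n R} (hA : A.IsHermitian)
    (X Y : Matrix n n R) : ((A * X)ᴴ * Y).trace = (Xᴴ * (A * Y)).trace := by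
  rw [conjTranspose_mul, hA.eq, Matrix.mul_assoc]

lemma Matrix.IsHermitian.trace_conjTranspose_mul_right {B : Matrix n n R} (hB : B.IsHermitian)
    (X Y : Matrix n n R) : ((X * B)ᴴ * Y).trace = (Xᴴ * (Y * B)).trace := by
  rw [conjTranspose_mul, hB.eq, Matrix.mul_assoc, trace_mul_comm, Matrix.mul_assoc]

end Trace

abbrev Spinor : Type := Fin 2 → Matrix (Fin 2) (Fin 2) ℂ

lemma spinInner_add_left (φ φ' ψ : Spinor) :
    spinInner (φ + φ') ψ = spinInner φ ψ + spinInner φ' ψ := by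
  simp only [spinInner, Pi.add_apply, conjTranspose_add, Matrix.add_mul, trace_add,
    Finset.sum_add_distrib]

lemma spinInner_add_right (φ ψ ψ' : Spinor) :
    spinInner φ (ψ + ψ') = spinInner φ ψ + spinInner φ ψ' := by
  simp only [spinInner, Pi.add_apply, Matrix.mul_add, trace_add, Finset.sum_add_distrib]

lemma spinInner_smul_left (c : ℂ) (φ ψ : Spinor) :
    spinInner (c • φ) ψ = star c * spinInner φ ψ := by
  simp only [spinInner, Pi.smul_apply, conjTranspose_smul, Matrix.smul_mul, trace_smul,
    smul_eq_mul, Finset.mul_sum]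

lemma spinInner_smul_right (c : ℂ) (φ ψ : Spinor) :
    spinInner φ (c • ψ) = c * spinInner φ ψ := by
  simp only [spinInner, Pi.smul_apply, Matrix.mul_smul, trace_smul, smul_eq_mul, Finset.mul_sum]

def SpinSymmetric (T : Spinor → Spinor) : Prop :=
  ∀ φ ψ, spinInner (T φ) ψ = spinInner φ (T ψ)

namespace SpinSymmetric

variable {T U : Spinor → Spinor}

lemma add (hT : SpinSymmetric T) (hU : SpinSymmetric U) : SpinSymmetric (fun ψ => T ψ + U ψ) :=
  fun φ ψ => by rw [spinInner_add_left, spinInner_add_right, hT, hU]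

lemma smul {r : ℂ} (hr : star r = r) (hT : SpinSymmetric T) : SpinSymmetric (fun ψ => r • T ψ) :=
  fun φ ψ => by rw [spinInner_smul_left, spinInner_smul_right, hr, hT]

lemma comp_of_commute (hT : SpinSymmetric T) (hU : SpinSymmetric U) (hTU : ∀ ψ, T (U ψ) = U (T ψ)) :
    SpinSymmetric (T ∘ U) :=
  fun φ ψ => by rw [Function.comp_apply, hT, hU, Function.comp_apply, hTU]

lemma inner_smul_eq_neg {c : ℂ} (hc : star c = -c) (hT : SpinSymmetric T) (φ ψ : Spinor) :
    spinInner (c • T φ) ψ = -spinInner φ (c • T ψ) := by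
  rw [spinInner_smul_left, spinInner_smul_right, hc, hT, neg_mul]

end SpinSymmetric

-- `S α β` plays the role of `S^α{}_β`, as in `Dirac`.
def spinMix (S : Matrix (Fin 2) (Fin 2) ℂ) (ψ : Spinor) : Spinor :=
  fun β => ∑ α, S α β • ψ α

def mulLeftAddMulRight (A B : Matrix (Fin 2) (Fin 2) ℂ) (ψ : Spinor) : Spinor :=
  fun α => A * ψ α + ψ α * B

lemma spinSymmetric_spinMix {S : Matrix (Fin 2) (Fin 2) ℂ} (hS : S.IsHermitian) :
    SpinSymmetric (spinMix S) := by
  intro φ ψ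
  have hS' : ∀ α β, star (S α β) = S β α := fun α β => by
    rw [← conjTranspose_apply, hS.eq]
  simp only [spinInner, spinMix, conjTranspose_sum, conjTranspose_smul, Finset.sum_mul,
    Matrix.mul_sum, Matrix.smul_mul, Matrix.mul_smul, trace_sum, trace_smul, hS']
  exact Finset.sum_comm

lemma spinSymmetric_mulLeftAddMulRight {A B : Matrix (Fin 2) (Fin 2) ℂ} (hA : A.IsHermitian)
    (hB : B.IsHermitian) : SpinSymmetric (mulLeftAddMulRight A B) := by
  intro φ ψ
  simp only [spinInner, mulLeftAddMulRight, conjTranspose_add, Matrix.add_mul, Matrix.mul_add,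
    trace_add, hA.trace_conjTranspose_mul_left, hB.trace_conjTranspose_mul_right]

lemma spinMix_mulLeftAddMulRight (S A B : Matrix (Fin 2) (Fin 2) ℂ) (ψ : Spinor) :
    spinMix S (mulLeftAddMulRight A B ψ) = mulLeftAddMulRight A B (spinMix S ψ) := by
  funext β
  simp only [spinMix, mulLeftAddMulRight, smul_add, Finset.sum_add_distrib, Finset.mul_sum,
    Finset.sum_mul, Matrix.mul_smul, Matrix.smul_mul]

lemma spinSymmetric_spinMix_comp_mulLeftAddMulRight {S A B : Matrix (Fin 2) (Fin 2) ℂ}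
    (hS : S.IsHermitian) (hA : A.IsHermitian) (hB : B.IsHermitian) :
    SpinSymmetric (spinMix S ∘ mulLeftAddMulRight A B) :=
  (spinSymmetric_spinMix hS).comp_of_commute (spinSymmetric_mulLeftAddMulRight hA hB)
    (spinMix_mulLeftAddMulRight S A B)

lemma Dirac_eq (ε' : ℂ) (ψ : Spinor) :
    Dirac ε' ψ = (I / (2 * (Real.sqrt 2 : ℂ))) •
      ((spinMix pauli1 ∘ mulLeftAddMulRight pauli1 pauli2) ψ +
        ε' • (spinMix pauli3 ∘ mulLeftAddMulRight pauli2 pauli1) ψ) := by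
  funext β
  simp only [Dirac, spinMix, mulLeftAddMulRight, Function.comp_apply, Pi.add_apply,
    Pi.smul_apply, Finset.sum_add_distrib, Finset.smul_sum, mul_smul, add_comm (ψ _ * pauli1)]

lemma isHermitian_pauli1 : IsHermitian pauli1 := by
  ext i j; fin_cases i <;> fin_cases j <;> simp [pauli1]

lemma isHermitian_pauli2 : IsHermitian pauli2 := by
  ext i j; fin_cases i <;> fin_cases j <;> simp [pauli2]

lemma isHermitian_pauli3 : IsHermitian pauli3 := by
  ext i j; fin_cases i <;> fin_cases j <;> simp [pauli3]

/-- the Dirac operator is antihermitian: `⟨D̸φ,ψ⟩ = -⟨φ,D̸ψ⟩`. -/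
theorem stmt16 (ε' : ℂ) (hε' : ε' = 1 ∨ ε' = -1)
    (φ ψ : Fin 2 → Matrix (Fin 2) (Fin 2) ℂ) :
    spinInner (Dirac ε' φ) ψ = -spinInner φ (Dirac ε' ψ) := by
  have hε'_real : star ε' = ε' := by rcases hε' with rfl | rfl <;> simp
  have hc : star (I / (2 * (Real.sqrt 2 : ℂ))) = -(I / (2 * (Real.sqrt 2 : ℂ))) := by
    simp [neg_div]
  have hH := (spinSymmetric_spinMix_comp_mulLeftAddMulRight isHermitian_pauli1 isHermitian_pauli1
    isHermitian_pauli2).add ((spinSymmetric_spinMix_comp_mulLeftAddMulRight isHermitian_pauli3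
      isHermitian_pauli2 isHermitian_pauli1).smul hε'_real)
  simp only [Dirac_eq]
  exact hH.inner_smul_eq_neg hc φ ψ
end
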